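/- arXiv:1403.1555 — 3 statements merged into one kernel-verified Lean document; each statement's English description precedes it below -/
import Mathlib

section
/- Let P be a unique factorization domain, f ∈ P an irreducible element, and (A, B) a matrix factorization of f of size p over P. Then there exist a unit u ∈ P and a natural number q ≤ p such that det(A) = u · f^q. -/
/-- Let `P` be a unique factorization domain, `f ∈ P` an irreducible element,
and `(A, B)` a matrix factorization of `f` of size `p` over `P`. Then there exist a unit
`u ∈ P` and a natural number `q ≤ p` such that `det A = u · f ^ q`. -/
theorem stmt_2 {P : Type*} [CommRing P] [IsDomain P] [UniqueFactorizationMonoid P]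
    (f : P) (hf : Irreducible f)
    (p : ℕ) (A B : Matrix (Fin p) (Fin p) P)
    (hAB : A * B = f • (1 : Matrix (Fin p) (Fin p) P))
    (hBA : B * A = f • (1 : Matrix (Fin p) (Fin p) P)) :
    ∃ (u : P) (q : ℕ), IsUnit u ∧ q ≤ p ∧ A.det = u * f ^ q := by
  have hdet : A.det * B.det = f ^ p := by
    rw [← Matrix.det_mul, hAB, Matrix.det_smul, Matrix.det_one, mul_one,
      Fintype.card_fin]
  have hdvd : A.det ∣ f ^ p := ⟨B.det, hdet.symm⟩
  have hprime : Prime f := hf.prime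
  obtain ⟨q, hq, hassoc⟩ := (dvd_prime_pow hprime p).mp hdvd
  obtain ⟨u, hu⟩ := hassoc
  refine ⟨(↑u⁻¹ : Pˣ), q, Units.isUnit _, hq, ?_⟩
  rw [mul_comm, ← hu, mul_assoc, Units.mul_inv, mul_one]
end

section
/- Let P be a commutative ring, f ∈ P a nonzerodivisor, and A a p × p matrix over P such that the P-linear map A : P^p → P^p is injective and f annihilates coker(A). Then there exists a p × p matrix B over P such that A·B = B·A = f·I_p; that is, (A, B) is a matrix factorization of f. -/
/-- Let `P` be a commutative ring, `f ∈ P` a nonzerodivisor, and `A` a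
`p × p` matrix over `P` such that the `P`-linear map `A : P^p → P^p` is injective and
`f` annihilates `coker A`.  Then there exists a `p × p` matrix `B` over `P` such that
`A·B = B·A = f·I_p`; that is, `(A, B)` is a matrix factorization of `f`. -/
theorem stmt_5 {P : Type*} [CommRing P] (f : P) (hf : f ∈ nonZeroDivisors P)
    (p : ℕ) (A : Matrix (Fin p) (Fin p) P)
    (hinj : Function.Injective (A.mulVecLin : (Fin p → P) →ₗ[P] (Fin p → P)))
    (hann : ∀ m : (Fin p → P) ⧸ LinearMap.range (A.mulVecLin : (Fin p → P) →ₗ[P] (Fin p → P)),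
      f • m = 0) :
    ∃ B : Matrix (Fin p) (Fin p) P,
      A * B = f • (1 : Matrix (Fin p) (Fin p) P) ∧
      B * A = f • (1 : Matrix (Fin p) (Fin p) P) := by
  have h : ∀ i : Fin p, ∃ b : Fin p → P, A.mulVec b = f • (Pi.single i 1 : Fin p → P) := by
    intro i
    have h0 := hann (Submodule.Quotient.mk (Pi.single i 1 : Fin p → P))
    rw [← Submodule.Quotient.mk_smul, Submodule.Quotient.mk_eq_zero] at h0
    obtain ⟨b, hb⟩ := h0
    exact ⟨b, by simpa using hb⟩
  choose b hb using h
  set B : Matrix (Fin p) (Fin p) P := Matrix.of (fun r c => b c r) with hB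
  have hAB : A * B = f • (1 : Matrix (Fin p) (Fin p) P) := by
    ext j i
    have := congrFun (hb i) j
    simp only [Matrix.mulVec, dotProduct, Pi.smul_apply, Pi.single_apply,
      smul_eq_mul] at this
    simp only [Matrix.mul_apply, hB, Matrix.of_apply, Matrix.smul_apply,
      Matrix.one_apply, smul_eq_mul, this]
  refine ⟨B, hAB, ?_⟩
  have hcancel : ∀ X Y : Matrix (Fin p) (Fin p) P, A * X = A * Y → X = Y := by
    intro X Y hXY
    ext j i
    have hcol : A.mulVec (fun k => X k i) = A.mulVec (fun k => Y k i) := by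
      ext r
      have := congrFun (congrFun hXY r) i
      simpa [Matrix.mul_apply, Matrix.mulVec, dotProduct] using this
    have := hinj (a₁ := fun k => X k i) (a₂ := fun k => Y k i)
      (by simpa [Matrix.mulVecLin_apply] using hcol)
    exact congrFun this j
  apply hcancel
  rw [← mul_assoc, hAB, Matrix.smul_mul, Matrix.mul_smul, one_mul, mul_one]
end

section
/- Let P be a commutative ring, f ∈ P a nonzerodivisor, (A, B) a matrix factorization of f of size p over P, and R = P/(f) the hypersurface ring. Let Ā and B̄ denote the reductions of A and B modulo (f), viewed as R-linear endomorphisms of R^p. Then the 2-periodic sequence is exact at every spot: range(B̄) = ker(Ā) and range(Ā) = ker(B̄) as submodules of R^p. -/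
open scoped Matrix

lemma mf_exact_aux {P : Type*} [CommRing P] (f : P) (hf : f ∈ nonZeroDivisors P)
    (p : ℕ) (A B : Matrix (Fin p) (Fin p) P)
    (hAB : A * B = f • (1 : Matrix (Fin p) (Fin p) P))
    (hBA : B * A = f • (1 : Matrix (Fin p) (Fin p) P)) :
    LinearMap.range ((B.map (Ideal.Quotient.mk (Ideal.span {f}))).mulVecLin) =
      LinearMap.ker ((A.map (Ideal.Quotient.mk (Ideal.span {f}))).mulVecLin) := by
  set π := Ideal.Quotient.mk (Ideal.span {f}) with hπ
  apply le_antisymm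
  · rintro _ ⟨v, rfl⟩
    simp only [LinearMap.mem_ker, Matrix.mulVecLin_apply, Matrix.mulVec_mulVec]
    rw [← Matrix.map_mul, hAB]
    ext i
    simp [Matrix.mulVec, dotProduct, Matrix.smul_apply, π,
      Ideal.Quotient.eq_zero_iff_mem, Ideal.mem_span_singleton]
  · intro x hx
    simp only [LinearMap.mem_ker, Matrix.mulVecLin_apply] at hx
    choose xt hxt using fun i => Ideal.Quotient.mk_surjective (I := Ideal.span {f}) (x i)
    have hAx : ∀ i, (A.mulVec xt) i ∈ Ideal.span {f} := by
      intro i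
      rw [← Ideal.Quotient.eq_zero_iff_mem]
      have := congrFun hx i
      rw [show π ((A *ᵥ xt) i) = ((A.map π) *ᵥ (π ∘ xt)) i from RingHom.map_mulVec π A xt i]
      have hcomp : π ∘ xt = x := funext hxt
      rw [hcomp]
      exact this
    choose y hy using fun i => Ideal.mem_span_singleton'.mp (hAx i)
    have hAxt : A.mulVec xt = f • y := by
      ext i; simpa [mul_comm] using (hy i).symm
    have key : f • xt = f • (B.mulVec y) := by
      have : B.mulVec (A.mulVec xt) = f • xt := by
        rw [Matrix.mulVec_mulVec, hBA]
        ext i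
        simp [Matrix.smul_mulVec, Matrix.one_mulVec]
      rw [hAxt, Matrix.mulVec_smul] at this
      exact this.symm
    have hxe : xt = B.mulVec y := by
      ext i
      have := congrFun key i
      simp only [Pi.smul_apply, smul_eq_mul] at this
      exact (mul_cancel_left_mem_nonZeroDivisors hf).mp this
    refine ⟨fun i => π (y i), ?_⟩
    ext i
    simp only [Matrix.mulVecLin_apply]
    rw [show ((B.map π) *ᵥ (fun i => π (y i))) i = π ((B *ᵥ y) i) from
      (RingHom.map_mulVec π B y i).symm, ← hxe, hxt]

/-- Let `P` be a commutative ring, `f ∈ P` a nonzerodivisor, `(A, B)` a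
matrix factorization of `f` of size `p` over `P`, and `R = P/(f)` the hypersurface ring.
Let `Ā` and `B̄` denote the reductions of `A` and `B` modulo `(f)`, viewed as `R`-linear
endomorphisms of `R^p`.  Then the 2-periodic sequence is exact at every spot:
`range B̄ = ker Ā` and `range Ā = ker B̄` as submodules of `R^p`. -/
theorem stmt_6 {P : Type*} [CommRing P] (f : P) (hf : f ∈ nonZeroDivisors P)
    (p : ℕ) (A B : Matrix (Fin p) (Fin p) P)
    (hAB : A * B = f • (1 : Matrix (Fin p) (Fin p) P))
    (hBA : B * A = f • (1 : Matrix (Fin p) (Fin p) P)) :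
    let R := P ⧸ Ideal.span {f}
    let Abar : Matrix (Fin p) (Fin p) R := A.map (Ideal.Quotient.mk (Ideal.span {f}))
    let Bbar : Matrix (Fin p) (Fin p) R := B.map (Ideal.Quotient.mk (Ideal.span {f}))
    LinearMap.range (Bbar.mulVecLin : (Fin p → R) →ₗ[R] (Fin p → R)) =
        LinearMap.ker (Abar.mulVecLin : (Fin p → R) →ₗ[R] (Fin p → R)) ∧
    LinearMap.range (Abar.mulVecLin : (Fin p → R) →ₗ[R] (Fin p → R)) =
        LinearMap.ker (Bbar.mulVecLin : (Fin p → R) →ₗ[R] (Fin p → R)) := by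
  exact ⟨mf_exact_aux f hf p A B hAB hBA, mf_exact_aux f hf p B A hBA hAB⟩
end
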